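/- arXiv:1402.3435 — 4 statements merged into one kernel-verified Lean document; each statement's English description precedes it below -/
import Mathlib

section
/- A multiset D of natural numbers with |D| ≥ 2 is k-realizable if and only if there exist two elements d_i, d_j of D (counted with multiplicity) such that the multiset obtained from D by removing d_i and d_j and inserting ω_k(d_i,d_j) is k-realizable. -/
/-- `ω_k(a,b) = min{a,b} - max{1, ⌈(k - |a-b|)/2⌉}`. -/
def omegaK (k : ℕ) (a b : ℤ) : ℤ :=
  min a b - max 1 ⌈(((k : ℤ) - |a - b| : ℤ) : ℚ) / 2⌉

/-- A rooted strict binary tree whose two edges below each internal vertex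
have positive integer lengths summing to `k`. -/
inductive LTree (k : ℕ) : Type
  | leaf : LTree k
  | node (l₁ l₂ : ℕ) (h₁ : 1 ≤ l₁) (h₂ : 1 ≤ l₂) (hsum : l₁ + l₂ = k)
      (t₁ t₂ : LTree k) : LTree k

/-- The multiset of depths of the leaves of an `L'(k)`-tree. -/
def LTree.leafDepths {k : ℕ} : LTree k → Multiset ℕ
  | .leaf => {0}
  | .node l₁ l₂ _ _ _ t₁ t₂ =>
      (t₁.leafDepths).map (· + l₁) + (t₂.leafDepths).map (· + l₂)

/-- A leaf signature `D` is `k`-realizable if some `L'(k)`-tree has leaves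
whose depths are at most the elements of `D` in some order. -/
def Realizable (k : ℕ) (D : Multiset ℤ) : Prop :=
  ∃ t : LTree k, Multiset.Rel (fun x y => (x : ℤ) ≤ y) t.leafDepths D

lemma ceil_half_bounds (m : ℤ) :
    m ≤ 2 * ⌈((m : ℚ)) / 2⌉ ∧ 2 * ⌈((m : ℚ)) / 2⌉ ≤ m + 1 := by
  constructor
  · have h := Int.le_ceil ((m : ℚ) / 2)
    have : (m : ℚ) ≤ 2 * (⌈((m : ℚ)) / 2⌉ : ℚ) := by linarith
    exact_mod_cast this
  · have h := Int.ceil_lt_add_one ((m : ℚ) / 2)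
    have : 2 * (⌈((m : ℚ)) / 2⌉ : ℚ) < m + 2 := by linarith
    have h2 : 2 * ⌈((m : ℚ)) / 2⌉ < m + 2 := by exact_mod_cast this
    omega

lemma min_le_omegaK {k : ℕ} {a b : ℤ} {l₁ l₂ : ℤ} (h₁ : 1 ≤ l₁) (h₂ : 1 ≤ l₂)
    (hs : l₁ + l₂ = (k : ℤ)) : min (a - l₁) (b - l₂) ≤ omegaK k a b := by
  obtain ⟨hc1, hc2⟩ := ceil_half_bounds ((k : ℤ) - |a - b|)
  unfold omegaK
  rcases le_total a b with hab | hab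
  · rw [abs_of_nonpos (by linarith)] at hc1 hc2 ⊢
    omega
  · rw [abs_of_nonneg (by linarith)] at hc1 hc2 ⊢
    omega

lemma omegaK_exists {k : ℕ} (hk : 2 ≤ k) (a b : ℤ) :
    ∃ l₁ l₂ : ℕ, 1 ≤ l₁ ∧ 1 ≤ l₂ ∧ l₁ + l₂ = k ∧
      omegaK k a b + l₁ ≤ a ∧ omegaK k a b + l₂ ≤ b := by
  obtain ⟨hc1, hc2⟩ := ceil_half_bounds ((k : ℤ) - |a - b|)
  unfold omegaK
  set c : ℤ := ⌈(((k : ℤ) - |a - b| : ℤ) : ℚ) / 2⌉ with hc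
  clear_value c
  rcases le_total a b with hab | hab
  · rw [abs_of_nonpos (by linarith)] at hc1 hc2
    rw [min_eq_left hab]
    exact ⟨(max 1 c).toNat, ((k : ℤ) - max 1 c).toNat, by omega, by omega, by omega,
      by omega, by omega⟩
  · rw [abs_of_nonneg (by linarith)] at hc1 hc2
    rw [min_eq_right hab]
    exact ⟨((k : ℤ) - max 1 c).toNat, (max 1 c).toNat, by omega, by omega, by omega,
      by omega, by omega⟩

lemma leafDepths_grow {k : ℕ} (t : LTree k) (x : ℕ) (hx : x ∈ t.leafDepths)
    (l₁ l₂ : ℕ) (h₁ : 1 ≤ l₁) (h₂ : 1 ≤ l₂) (hs : l₁ + l₂ = k) :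
    ∃ t' : LTree k, t'.leafDepths = (x + l₁) ::ₘ (x + l₂) ::ₘ t.leafDepths.erase x := by
  induction t generalizing x with
  | leaf =>
    simp only [LTree.leafDepths, Multiset.mem_singleton] at hx
    subst hx
    exact ⟨.node l₁ l₂ h₁ h₂ hs .leaf .leaf, by simp [LTree.leafDepths]⟩
  | node m₁ m₂ hm₁ hm₂ hms t₁ t₂ ih₁ ih₂ =>
    simp only [LTree.leafDepths, Multiset.mem_add, Multiset.mem_map] at hx
    have hinj₁ : Function.Injective (· + m₁ : ℕ → ℕ) := fun u v h => by simpa using h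
    have hinj₂ : Function.Injective (· + m₂ : ℕ → ℕ) := fun u v h => by simpa using h
    rcases hx with ⟨y, hy, rfl⟩ | ⟨y, hy, rfl⟩
    · obtain ⟨t₁', ht₁'⟩ := ih₁ y hy
      refine ⟨.node m₁ m₂ hm₁ hm₂ hms t₁' t₂, ?_⟩
      simp only [LTree.leafDepths, ht₁', Multiset.map_cons]
      rw [Multiset.erase_add_left_pos _ (Multiset.mem_map_of_mem _ hy),
        ← Multiset.map_erase _ hinj₁, Multiset.cons_add, Multiset.cons_add,
        add_right_comm y l₁ m₁, add_right_comm y l₂ m₁]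
    · obtain ⟨t₂', ht₂'⟩ := ih₂ y hy
      refine ⟨.node m₁ m₂ hm₁ hm₂ hms t₁ t₂', ?_⟩
      simp only [LTree.leafDepths, ht₂', Multiset.map_cons]
      rw [Multiset.erase_add_right_pos _ (Multiset.mem_map_of_mem _ hy),
        ← Multiset.map_erase _ hinj₂, add_right_comm y l₁ m₂, add_right_comm y l₂ m₂,
        add_comm ((t₁.leafDepths).map (· + m₁)), Multiset.cons_add, Multiset.cons_add,
        add_comm ((t₂.leafDepths.erase y).map (· + m₂))]

lemma leafDepths_sibling {k : ℕ} (t : LTree k) (h : t ≠ .leaf) :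
    ∃ m₁ m₂ : ℕ, 1 ≤ m₁ ∧ 1 ≤ m₂ ∧ m₁ + m₂ = k ∧
      ∃ (p : ℕ) (t' : LTree k), p ∈ t'.leafDepths ∧
        t.leafDepths = (p + m₁) ::ₘ (p + m₂) ::ₘ t'.leafDepths.erase p := by
  induction t with
  | leaf => exact absurd rfl h
  | node l₁ l₂ h₁ h₂ hs t₁ t₂ ih₁ ih₂ =>
    have hinj₁ : Function.Injective (· + l₁ : ℕ → ℕ) := fun u v h => by simpa using h
    have hinj₂ : Function.Injective (· + l₂ : ℕ → ℕ) := fun u v h => by simpa using h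
    cases t₁ with
    | node a₁ a₂ b₁ b₂ bs s₁ s₂ =>
      obtain ⟨m₁, m₂, hm₁, hm₂, hms, p, t', hp, heq⟩ := ih₁ (by simp)
      refine ⟨m₁, m₂, hm₁, hm₂, hms, p + l₁, .node l₁ l₂ h₁ h₂ hs t' t₂, ?_, ?_⟩
      · simp only [LTree.leafDepths, Multiset.mem_add]
        exact Or.inl (Multiset.mem_map_of_mem _ hp)
      · show (LTree.node a₁ a₂ b₁ b₂ bs s₁ s₂).leafDepths.map (· + l₁)
            + t₂.leafDepths.map (· + l₂) = _
        rw [heq]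
        simp only [LTree.leafDepths, Multiset.map_cons]
        rw [Multiset.erase_add_left_pos _ (Multiset.mem_map_of_mem _ hp),
          ← Multiset.map_erase _ hinj₁, Multiset.cons_add, Multiset.cons_add,
          add_right_comm p m₁ l₁, add_right_comm p m₂ l₁]
    | leaf =>
      cases t₂ with
      | node a₁ a₂ b₁ b₂ bs s₁ s₂ =>
        obtain ⟨m₁, m₂, hm₁, hm₂, hms, p, t', hp, heq⟩ := ih₂ (by simp)
        refine ⟨m₁, m₂, hm₁, hm₂, hms, p + l₂, .node l₁ l₂ h₁ h₂ hs LTree.leaf t', ?_, ?_⟩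
        · simp only [LTree.leafDepths, Multiset.mem_add]
          exact Or.inr (Multiset.mem_map_of_mem _ hp)
        · show LTree.leaf.leafDepths.map (· + l₁)
              + (LTree.node a₁ a₂ b₁ b₂ bs s₁ s₂).leafDepths.map (· + l₂) = _
          rw [heq]
          simp only [LTree.leafDepths, Multiset.map_cons]
          rw [Multiset.erase_add_right_pos _ (Multiset.mem_map_of_mem _ hp),
            ← Multiset.map_erase _ hinj₂, add_right_comm p m₁ l₂, add_right_comm p m₂ l₂]
          rw [add_comm (Multiset.map (· + l₁) ({0} : Multiset ℕ)), Multiset.cons_add,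
            Multiset.cons_add, add_comm ((t'.leafDepths.erase p).map (· + l₂))]
      | leaf =>
        exact ⟨l₁, l₂, h₁, h₂, hs, 0, .leaf, by simp [LTree.leafDepths],
          by simp [LTree.leafDepths]⟩

lemma coe_multiset_eq_map (s : Multiset ℕ) :
    (↑s : Multiset ℤ) = Multiset.map (fun n : ℕ => (n : ℤ)) s := by
  show s.bind _ = _
  simp [Multiset.pure_def, Multiset.bind_singleton]

lemma cast_nat_int_inj : Function.Injective (fun n : ℕ => (n : ℤ)) :=
  fun a b h => by simpa using h

theorem realizable_iff_merge (k : ℕ) (hk : 2 ≤ k) (D : Multiset ℤ)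
    (hD : ∀ d ∈ D, 0 ≤ d) (hcard : 2 ≤ Multiset.card D) :
    Realizable k D ↔ ∃ di ∈ D, ∃ dj ∈ D.erase di,
      Realizable k (((D.erase di).erase dj).cons (omegaK k di dj)) := by
  constructor
  · rintro ⟨t, hrel⟩
    have hne : t ≠ .leaf := by
      rintro rfl
      have hc := Multiset.card_eq_card_of_rel hrel
      rw [coe_multiset_eq_map] at hc
      simp [LTree.leafDepths] at hc
      omega
    obtain ⟨m₁, m₂, hm₁, hm₂, hms, p, t', hp, heq⟩ := leafDepths_sibling t hne
    rw [coe_multiset_eq_map, heq, Multiset.map_cons, Multiset.map_cons,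
      Multiset.rel_cons_left] at hrel
    obtain ⟨di, D₁, hdi, hrel, rfl⟩ := hrel
    rw [Multiset.rel_cons_left] at hrel
    obtain ⟨dj, D₂, hdj, hrel, rfl⟩ := hrel
    refine ⟨di, Multiset.mem_cons_self _ _, dj, ?_, ?_⟩
    · rw [Multiset.erase_cons_head]
      exact Multiset.mem_cons_self _ _
    · rw [Multiset.erase_cons_head, Multiset.erase_cons_head]
      refine ⟨t', ?_⟩
      rw [coe_multiset_eq_map, ← Multiset.cons_erase hp, Multiset.map_cons]
      refine Multiset.Rel.cons ?_ hrel
      have hmin : min (di - (m₁ : ℤ)) (dj - (m₂ : ℤ)) ≤ omegaK k di dj :=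
        min_le_omegaK (by exact_mod_cast hm₁) (by exact_mod_cast hm₂)
          (by exact_mod_cast hms)
      have h1 : (p : ℤ) + m₁ ≤ di := by exact_mod_cast hdi
      have h2 : (p : ℤ) + m₂ ≤ dj := by exact_mod_cast hdj
      show (p : ℤ) ≤ omegaK k di dj
      omega
  · rintro ⟨di, hdi, dj, hdj, t, hrel⟩
    rw [coe_multiset_eq_map, Multiset.rel_cons_right] at hrel
    obtain ⟨x, S, hx, hrelS, hts⟩ := hrel
    have hxmem : x ∈ (t.leafDepths).map (fun n : ℕ => (n : ℤ)) := by
      rw [hts]; exact Multiset.mem_cons_self _ _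
    obtain ⟨y, hy, hyx⟩ := Multiset.mem_map.1 hxmem
    obtain ⟨l₁, l₂, hl₁, hl₂, hls, ha, hb⟩ := omegaK_exists hk di dj
    obtain ⟨t', ht'⟩ := leafDepths_grow t y hy l₁ l₂ hl₁ hl₂ hls
    refine ⟨t', ?_⟩
    have hDeq : D = di ::ₘ dj ::ₘ ((D.erase di).erase dj) := by
      rw [Multiset.cons_erase hdj, Multiset.cons_erase hdi]
    have hS : ((t.leafDepths).erase y).map (fun n : ℕ => (n : ℤ)) = S := by
      rw [Multiset.map_erase _ cast_nat_int_inj, hts, hyx, Multiset.erase_cons_head]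
    rw [hDeq, coe_multiset_eq_map, ht', Multiset.map_cons, Multiset.map_cons, hS]
    refine Multiset.Rel.cons ?_ (Multiset.Rel.cons ?_ hrelS)
    · show ((y + l₁ : ℕ) : ℤ) ≤ di
      push_cast
      rw [hyx]
      omega
    · show ((y + l₂ : ℕ) : ℤ) ≤ dj
      push_cast
      rw [hyx]
      omega
end

section
/- A leaf signature D = {d₁,…,d_n} is k-realizable if and only if the truncated signature D' = {min{d₁,(k−1)(n−1)},…,min{d_n,(k−1)(n−1)}} is k-realizable. -/
lemma LTree.leafDepths_card_pos {k : ℕ} (t : LTree k) :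
    1 ≤ Multiset.card t.leafDepths := by
  induction t with
  | leaf => simp [LTree.leafDepths]
  | node l₁ l₂ h₁ h₂ hsum t₁ t₂ ih₁ ih₂ =>
      simp only [LTree.leafDepths, Multiset.card_add, Multiset.card_map]
      omega

lemma LTree.depth_bound {k : ℕ} (t : LTree k) :
    ∀ d ∈ t.leafDepths, d ≤ (k - 1) * (Multiset.card t.leafDepths - 1) := by
  induction t with
  | leaf => intro d hd; simp [LTree.leafDepths] at hd; omega
  | node l₁ l₂ h₁ h₂ hsum t₁ t₂ ih₁ ih₂ =>
      intro d hd
      have hc₁ := t₁.leafDepths_card_pos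
      have hc₂ := t₂.leafDepths_card_pos
      simp only [LTree.leafDepths, Multiset.mem_add, Multiset.mem_map] at hd
      simp only [LTree.leafDepths, Multiset.card_add, Multiset.card_map]
      set n₁ := Multiset.card t₁.leafDepths
      set n₂ := Multiset.card t₂.leafDepths
      rcases hd with ⟨d₁, hd₁, rfl⟩ | ⟨d₂, hd₂, rfl⟩
      · have := ih₁ d₁ hd₁
        have hl : l₁ ≤ k - 1 := by omega
        have h1 : d₁ + l₁ ≤ (k - 1) * (n₁ - 1) + (k - 1) := by omega
        have h2 : (k - 1) * (n₁ - 1) + (k - 1) = (k - 1) * n₁ := by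
          have : n₁ - 1 + 1 = n₁ := by omega
          rw [← Nat.mul_succ]; rw [Nat.succ_eq_add_one, this]
        have h3 : (k - 1) * n₁ ≤ (k - 1) * (n₁ + n₂ - 1) :=
          Nat.mul_le_mul_left _ (by omega)
        omega
      · have := ih₂ d₂ hd₂
        have hl : l₂ ≤ k - 1 := by omega
        have h1 : d₂ + l₂ ≤ (k - 1) * (n₂ - 1) + (k - 1) := by omega
        have h2 : (k - 1) * (n₂ - 1) + (k - 1) = (k - 1) * n₂ := by
          have : n₂ - 1 + 1 = n₂ := by omega
          rw [← Nat.mul_succ]; rw [Nat.succ_eq_add_one, this]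
        have h3 : (k - 1) * n₂ ≤ (k - 1) * (n₁ + n₂ - 1) :=
          Nat.mul_le_mul_left _ (by omega)
        omega

lemma coeM_eq {k : ℕ} (t : LTree k) :
    (do let a ← t.leafDepths; pure ((a : ℤ))) = t.leafDepths.map ((↑·) : ℕ → ℤ) := by
  show t.leafDepths.bind (fun x => {(x : ℤ)}) = _
  exact Multiset.bind_singleton _ _

theorem realizable_iff_truncated (k : ℕ) (hk : 2 ≤ k) (D : Multiset ℤ)
    (hD : ∀ d ∈ D, 0 ≤ d) :
    Realizable k D ↔
      Realizable k (D.map (fun d =>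
        min d (((k - 1) * (Multiset.card D - 1) : ℕ) : ℤ))) := by
  constructor
  · rintro ⟨t, ht⟩
    refine ⟨t, ?_⟩
    rw [coeM_eq] at ht ⊢
    have hcard : Multiset.card t.leafDepths = Multiset.card D := by
      have := Multiset.card_eq_card_of_rel ht
      simpa using this
    rw [Multiset.rel_map_right]
    refine ht.mono ?_
    intro x hx y hy hxy
    refine le_min hxy ?_
    obtain ⟨a, ha, rfl⟩ := Multiset.mem_map.mp hx
    have := t.depth_bound a ha
    rw [hcard] at this
    exact_mod_cast this
  · rintro ⟨t, ht⟩
    refine ⟨t, ?_⟩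
    rw [coeM_eq] at ht ⊢
    rw [Multiset.rel_map_right] at ht
    refine ht.mono ?_
    intro x hx y hy hxy
    exact le_trans hxy (min_le_left _ _)
end

section
/- Let T be an L'(k)-tree realizing the multiset D (each leaf assigned a bound from D), let v, w be two leaves with common parent u assigned bounds d_i, d_j. Then depth(u) ≤ ω_k(d_i,d_j), and the tree obtained from T by deleting v, w and their incident edges realizes (D \ {d_i,d_j}) ∪ {ω_k(d_i,d_j)}. -/
/-- `Prune k t du a b t'` : `t` contains an internal vertex `u` at depth `du`
whose two children are leaves reached by edges of lengths `a` and `b`, and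
`t'` is obtained from `t` by deleting those two leaves and their edges. -/
inductive Prune (k : ℕ) : LTree k → ℕ → ℕ → ℕ → LTree k → Prop
  | base (l₁ l₂ : ℕ) (h₁ : 1 ≤ l₁) (h₂ : 1 ≤ l₂) (hs : l₁ + l₂ = k) :
      Prune k (.node l₁ l₂ h₁ h₂ hs .leaf .leaf) 0 l₁ l₂ .leaf
  | left (l₁ l₂ : ℕ) (h₁ : 1 ≤ l₁) (h₂ : 1 ≤ l₂) (hs : l₁ + l₂ = k)
      (t₁ t₂ t₁' : LTree k) (du a b : ℕ) :
      Prune k t₁ du a b t₁' →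
      Prune k (.node l₁ l₂ h₁ h₂ hs t₁ t₂) (du + l₁) a b (.node l₁ l₂ h₁ h₂ hs t₁' t₂)
  | right (l₁ l₂ : ℕ) (h₁ : 1 ≤ l₁) (h₂ : 1 ≤ l₂) (hs : l₁ + l₂ = k)
      (t₁ t₂ t₂' : LTree k) (du a b : ℕ) :
      Prune k t₂ du a b t₂' →
      Prune k (.node l₁ l₂ h₁ h₂ hs t₁ t₂) (du + l₂) a b (.node l₁ l₂ h₁ h₂ hs t₁ t₂')

lemma prune_facts {k : ℕ} {t t' : LTree k} {du a b : ℕ} (hp : Prune k t du a b t') :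
    1 ≤ a ∧ 1 ≤ b ∧ a + b = k ∧ du ∈ t'.leafDepths := by
  induction hp with
  | base l₁ l₂ h₁ h₂ hs => exact ⟨h₁, h₂, hs, by simp [LTree.leafDepths]⟩
  | left l₁ l₂ h₁ h₂ hs t₁ t₂ t₁' du a b _ ih =>
      refine ⟨ih.1, ih.2.1, ih.2.2.1, ?_⟩
      simp only [LTree.leafDepths, Multiset.mem_add, Multiset.mem_map]
      exact Or.inl ⟨du, ih.2.2.2, rfl⟩
  | right l₁ l₂ h₁ h₂ hs t₁ t₂ t₂' du a b _ ih =>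
      refine ⟨ih.1, ih.2.1, ih.2.2.1, ?_⟩
      simp only [LTree.leafDepths, Multiset.mem_add, Multiset.mem_map]
      exact Or.inr ⟨du, ih.2.2.2, rfl⟩

theorem prune_cherry (k : ℕ) (hk : 2 ≤ k) (t t' : LTree k) (du a b : ℕ)
    (hp : Prune k t du a b t') (D : Multiset ℤ) (di dj : ℤ)
    (hdi : di ∈ D) (hdj : dj ∈ D.erase di)
    (hva : ((du + a : ℕ) : ℤ) ≤ di) (hvb : ((du + b : ℕ) : ℤ) ≤ dj)
    (hrel : Multiset.Rel (fun x y => (x : ℤ) ≤ y)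
      (t'.leafDepths.erase du) ((D.erase di).erase dj)) :
    (du : ℤ) ≤ omegaK k di dj ∧
    Multiset.Rel (fun x y => (x : ℤ) ≤ y) t'.leafDepths
      (((D.erase di).erase dj).cons (omegaK k di dj)) := by
  obtain ⟨ha, hb, hab, hmem⟩ := prune_facts hp
  push_cast at hva hvb
  have key : (k : ℤ) - |di - dj| ≤ 2 * (min di dj - du) := by
    rcases le_total di dj with h | h
    · rw [min_eq_left h, abs_of_nonpos (by omega)]; omega
    · rw [min_eq_right h, abs_of_nonneg (by omega)]; omega
  have hc : ⌈(((k : ℤ) - |di - dj| : ℤ) : ℚ) / 2⌉ ≤ min di dj - du := by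
    rw [Int.ceil_le, div_le_iff₀ (by norm_num)]
    have h2 : (((k : ℤ) - |di - dj| : ℤ) : ℚ) ≤ ((2 * (min di dj - du) : ℤ) : ℚ) :=
      Int.cast_le.mpr key
    push_cast at h2 ⊢
    linarith
  have h1le : (1 : ℤ) ≤ min di dj - du := by
    rcases le_total di dj with h | h <;> simp only [min_def, h, if_true, if_false] <;> omega
  have hmain : (du : ℤ) ≤ omegaK k di dj := by
    unfold omegaK
    have := max_le h1le hc
    omega
  refine ⟨hmain, ?_⟩
  simp only [Multiset.pure_def, Multiset.bind_def, Multiset.bind_singleton] at hrel ⊢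
  rw [show t'.leafDepths = du ::ₘ t'.leafDepths.erase du from (Multiset.cons_erase hmem).symm,
    Multiset.map_cons]
  exact Multiset.Rel.cons hmain hrel
end

section
/- For a fixed first index i in a sorted signature a₁ ≤ … ≤ a_{z+1}, the function j ↦ ω_k(a_i,a_j) with i < j takes at most k distinct values; consequently, up to domination, at most k·z merged signatures B_{i,j} arise from all pairs i < j. -/
/-- The merged (and truncated) signature `B_{i,j}`. -/
def mergedSig (k : ℕ) (L : List ℤ) (i j : Fin L.length) : Multiset ℤ :=
  let ω := omegaK k (L.get i) (L.get j)
  ((((L : Multiset ℤ).erase (L.get i)).erase (L.get j)).cons ω).map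
    (fun b => min b (min (((L.length - 2) * (k - 1) : ℕ) : ℤ) (ω + (k : ℤ) - 1)))

lemma omegaK_bounds (k : ℕ) (hk : 2 ≤ k) {a b : ℤ} (hab : a ≤ b) :
    a - ((k : ℤ) - 1) ≤ omegaK k a b ∧ omegaK k a b ≤ a - 1 := by
  have hmin : min a b = a := min_eq_left hab
  have habs : |a - b| = b - a := by rw [abs_sub_comm]; exact abs_of_nonneg (by linarith)
  unfold omegaK
  rw [hmin, habs]
  have hcle : ⌈(((k : ℤ) - (b - a) : ℤ) : ℚ) / 2⌉ ≤ (k : ℤ) - 1 := by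
    apply Int.ceil_le.2
    push_cast
    have h2 : (2:ℚ) ≤ (k:ℚ) := by exact_mod_cast hk
    have h3 : (a:ℚ) ≤ (b:ℚ) := by exact_mod_cast hab
    linarith
  have h1 : (1:ℤ) ≤ max 1 ⌈(((k : ℤ) - (b - a) : ℤ) : ℚ) / 2⌉ := le_max_left _ _
  have h2 : max 1 ⌈(((k : ℤ) - (b - a) : ℤ) : ℚ) / 2⌉ ≤ (k:ℤ) - 1 :=
    max_le (by omega) hcle
  omega

lemma count_two {L : List ℤ} {i j : Fin L.length} {v : ℤ} (hij : (i:ℕ) < j)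
    (hvi : L.get i = v) (hvj : L.get j = v) : 2 ≤ L.count v := by
  have hsplit : L = L.take ((i:ℕ)+1) ++ L.drop ((i:ℕ)+1) := (List.take_append_drop _ L).symm
  have h1 : v ∈ L.take ((i:ℕ)+1) := by
    have hl : (i:ℕ) < (L.take ((i:ℕ)+1)).length := by
      rw [List.length_take]; exact lt_min (Nat.lt_succ_self _) i.isLt
    have : (L.take ((i:ℕ)+1))[(i:ℕ)]'hl = L.get i := by
      rw [List.getElem_take]; rfl
    rw [← hvi, ← this]; exact List.getElem_mem hl
  have h2 : v ∈ L.drop ((i:ℕ)+1) := by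
    have hl : (j:ℕ) - ((i:ℕ)+1) < (L.drop ((i:ℕ)+1)).length := by
      rw [List.length_drop]; omega
    have : (L.drop ((i:ℕ)+1))[(j:ℕ) - ((i:ℕ)+1)]'hl = L.get j := by
      rw [List.getElem_drop]
      congr 1
      omega
    rw [← hvj, ← this]; exact List.getElem_mem hl
  calc (2:ℕ) = 1 + 1 := rfl
    _ ≤ (L.take ((i:ℕ)+1)).count v + (L.drop ((i:ℕ)+1)).count v := by
        gcongr <;> [exact List.count_pos_iff.2 h1; exact List.count_pos_iff.2 h2]
    _ = L.count v := by conv_rhs => rw [hsplit]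
                        rw [List.count_append]

lemma mem_erase_get {L : List ℤ} {i j : Fin L.length} (hij : (i:ℕ) < j) :
    L.get j ∈ ((L : Multiset ℤ).erase (L.get i)) := by
  by_cases hv : L.get j = L.get i
  · have h2 : 2 ≤ (L : Multiset ℤ).count (L.get i) := by
      simpa using count_two hij rfl hv
    have : 0 < ((L : Multiset ℤ).erase (L.get i)).count (L.get i) := by
      rw [Multiset.count_erase_self]; omega
    rw [hv]
    exact Multiset.count_pos.1 this
  · exact (Multiset.mem_erase_of_ne hv).2 (by simpa using List.get_mem L j)

lemma rel_erase_le (M : Multiset ℤ) {a b : ℤ} (ha : a ∈ M) (hb : b ∈ M) (hba : b ≤ a) :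
    Multiset.Rel (fun x y => x ≤ y) (M.erase a) (M.erase b) := by
  by_cases hab : a = b
  · subst hab; exact Multiset.rel_refl_of_refl_on fun x _ => le_refl x
  · have hb' : b ∈ M.erase a := (Multiset.mem_erase_of_ne (fun h => hab h.symm)).2 hb
    have ha' : a ∈ M.erase b := (Multiset.mem_erase_of_ne hab).2 ha
    have h1 : M.erase a = b ::ₘ (M.erase a).erase b := (Multiset.cons_erase hb').symm
    have h2 : M.erase b = a ::ₘ (M.erase a).erase b := by
      rw [Multiset.erase_comm]; exact (Multiset.cons_erase ha').symm
    rw [h1, h2]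
    exact Multiset.Rel.cons hba (Multiset.rel_refl_of_refl_on fun x _ => le_refl x)

lemma mergedSig_rel (k : ℕ) (L : List ℤ) (i j j' : Fin L.length)
    (hij : (i:ℕ) < j) (hij' : (i:ℕ) < j')
    (hω : omegaK k (L.get i) (L.get j') = omegaK k (L.get i) (L.get j))
    (hle : L.get j' ≤ L.get j) :
    Multiset.Rel (fun a b => a ≤ b) (mergedSig k L i j) (mergedSig k L i j') := by
  unfold mergedSig
  rw [hω]
  simp only []
  set ω := omegaK k (L.get i) (L.get j) with hωdef
  set c := min (((L.length - 2) * (k - 1) : ℕ) : ℤ) (ω + (k : ℤ) - 1) with hc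
  apply Multiset.rel_map.2
  apply Multiset.Rel.mono
  · exact Multiset.Rel.cons (le_refl ω)
      (rel_erase_le _ (mem_erase_get hij) (mem_erase_get hij') hle)
  · intro a _ b _ hab
    exact min_le_min hab (le_refl c)

lemma part1 (k : ℕ) (hk : 2 ≤ k) (L : List ℤ) (hL : L.Pairwise (· ≤ ·)) (i : Fin L.length) :
    ((Finset.univ.filter (fun j : Fin L.length => (i : ℕ) < j)).image
      (fun j => omegaK k (L.get i) (L.get j))).card ≤ k := by
  classical
  have hsub : ((Finset.univ.filter (fun j : Fin L.length => (i : ℕ) < j)).image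
      (fun j => omegaK k (L.get i) (L.get j))) ⊆
      Finset.Icc (L.get i - ((k:ℤ) - 1)) (L.get i - 1) := by
    intro x hx
    simp only [Finset.mem_image, Finset.mem_filter] at hx
    obtain ⟨j, ⟨-, hij⟩, rfl⟩ := hx
    have hab : L.get i ≤ L.get j := hL.rel_get_of_lt hij
    exact Finset.mem_Icc.2 (omegaK_bounds k hk hab)
  have := Finset.card_le_card hsub
  rw [Int.card_Icc] at this
  omega

def phiSet (k : ℕ) (L : List ℤ) (i : Fin L.length) (v : ℤ) : Finset (Fin L.length) :=
  Finset.univ.filter (fun j => (i:ℕ) < (j:ℕ) ∧ omegaK k (L.get i) (L.get j) = v)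

def repJ (k : ℕ) (L : List ℤ) (i j : Fin L.length) : Fin L.length :=
  if h : (phiSet k L i (omegaK k (L.get i) (L.get j))).Nonempty
  then (phiSet k L i (omegaK k (L.get i) (L.get j))).min' h else j

lemma mem_phiSet {k : ℕ} {L : List ℤ} {i j : Fin L.length} (hij : (i:ℕ) < j) :
    j ∈ phiSet k L i (omegaK k (L.get i) (L.get j)) := by
  simp only [phiSet, Finset.mem_filter, Finset.mem_univ, true_and]
  exact ⟨hij, trivial⟩

lemma repJ_eq {k : ℕ} {L : List ℤ} {i j : Fin L.length} (hij : (i:ℕ) < j) :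
    repJ k L i j = (phiSet k L i (omegaK k (L.get i) (L.get j))).min'
      ⟨j, mem_phiSet hij⟩ := by
  unfold repJ
  rw [dif_pos ⟨j, mem_phiSet hij⟩]

lemma repJ_mem {k : ℕ} {L : List ℤ} {i j : Fin L.length} (hij : (i:ℕ) < j) :
    repJ k L i j ∈ phiSet k L i (omegaK k (L.get i) (L.get j)) := by
  rw [repJ_eq hij]; exact Finset.min'_mem _ _

lemma repJ_lt {k : ℕ} {L : List ℤ} {i j : Fin L.length} (hij : (i:ℕ) < j) :
    (i:ℕ) < repJ k L i j :=
  ((Finset.mem_filter.1 (repJ_mem hij)).2).1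

lemma repJ_omega {k : ℕ} {L : List ℤ} {i j : Fin L.length} (hij : (i:ℕ) < j) :
    omegaK k (L.get i) (L.get (repJ k L i j)) = omegaK k (L.get i) (L.get j) :=
  ((Finset.mem_filter.1 (repJ_mem hij)).2).2

lemma repJ_le {k : ℕ} {L : List ℤ} {i j : Fin L.length} (hij : (i:ℕ) < j) :
    repJ k L i j ≤ j := by
  rw [repJ_eq hij]; exact Finset.min'_le _ _ (mem_phiSet hij)

lemma repJ_inj {k : ℕ} {L : List ℤ} {i j j' : Fin L.length} (hij : (i:ℕ) < j)
    (hij' : (i:ℕ) < j')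
    (h : omegaK k (L.get i) (L.get (repJ k L i j)) = omegaK k (L.get i) (L.get (repJ k L i j'))) :
    repJ k L i j = repJ k L i j' := by
  have h2 : omegaK k (L.get i) (L.get j) = omegaK k (L.get i) (L.get j') := by
    rw [← repJ_omega hij, ← repJ_omega hij', h]
  rw [repJ_eq hij, repJ_eq hij']
  congr 1
  rw [h2]

theorem mergedSig_count (k : ℕ) (hk : 2 ≤ k) (L : List ℤ)
    (hL : L.Pairwise (· ≤ ·)) (hlen : 2 ≤ L.length) :
    (∀ i : Fin L.length,
      ((Finset.univ.filter (fun j : Fin L.length => (i : ℕ) < j)).image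
        (fun j => omegaK k (L.get i) (L.get j))).card ≤ k) ∧
    ∃ S : Finset (Multiset ℤ), S.card ≤ k * (L.length - 1) ∧
      (∀ B ∈ S, ∃ i j : Fin L.length, (i : ℕ) < j ∧ B = mergedSig k L i j) ∧
      ∀ i j : Fin L.length, (i : ℕ) < j →
        ∃ B ∈ S, Multiset.Rel (fun a b => a ≤ b) (mergedSig k L i j) B := by
  classical
  refine ⟨part1 k hk L hL, ?_⟩
  set P : Finset (Fin L.length × Fin L.length) :=
    Finset.univ.filter (fun p => (p.1:ℕ) < p.2) with hP
  have hPmem : ∀ p : Fin L.length × Fin L.length, p ∈ P ↔ (p.1:ℕ) < p.2 := by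
    intro p; simp [hP]
  refine ⟨P.image (fun p => mergedSig k L p.1 (repJ k L p.1 p.2)), ?_, ?_, ?_⟩
  · -- cardinality bound
    set R : Finset (Fin L.length × Fin L.length) :=
      P.image (fun p => (p.1, repJ k L p.1 p.2)) with hR
    have hcard1 : (P.image (fun p => mergedSig k L p.1 (repJ k L p.1 p.2))).card ≤ R.card := by
      have : P.image (fun p => mergedSig k L p.1 (repJ k L p.1 p.2)) =
          R.image (fun q => mergedSig k L q.1 q.2) := by
        rw [hR, Finset.image_image]
        rfl
      rw [this]
      exact Finset.card_image_le
    set φ : Fin L.length × Fin L.length → Fin L.length × ℤ :=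
      fun q => (q.1, omegaK k (L.get q.1) (L.get q.2)) with hφ
    have hinj : Set.InjOn φ R := by
      intro q hq q' hq' heq
      obtain ⟨⟨i, j⟩, hp, rfl⟩ := Finset.mem_image.1 hq
      obtain ⟨⟨i', j'⟩, hp', rfl⟩ := Finset.mem_image.1 hq'
      have hp1 : (i:ℕ) < j := (hPmem (i, j)).1 hp
      have hp'1 : (i':ℕ) < j' := (hPmem (i', j')).1 hp'
      simp only [hφ, Prod.mk.injEq] at heq ⊢
      obtain ⟨h1, h2⟩ := heq
      subst h1
      exact ⟨rfl, repJ_inj hp1 hp'1 h2⟩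
    have hcard2 : R.card = (R.image φ).card := (Finset.card_image_of_injOn hinj).symm
    set I : Finset (Fin L.length) :=
      Finset.univ.filter (fun i : Fin L.length => (i:ℕ) + 1 < L.length) with hI
    set T : Finset (Fin L.length × ℤ) :=
      I.biUnion (fun i => ({i} : Finset (Fin L.length)) ×ˢ
        ((Finset.univ.filter (fun j : Fin L.length => (i : ℕ) < j)).image
          (fun j => omegaK k (L.get i) (L.get j)))) with hT
    have hsub : R.image φ ⊆ T := by
      intro q hq
      obtain ⟨q', hq', rfl⟩ := Finset.mem_image.1 hq
      obtain ⟨p, hp, rfl⟩ := Finset.mem_image.1 hq'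
      have hp1 : (p.1:ℕ) < p.2 := (hPmem p).1 hp
      apply Finset.mem_biUnion.2
      refine ⟨p.1, ?_, ?_⟩
      · simp only [hI, Finset.mem_filter, Finset.mem_univ, true_and]
        have := p.2.isLt
        omega
      · apply Finset.mem_product.2
        constructor
        · exact Finset.mem_singleton_self _
        · simp only [hφ]
          rw [repJ_omega hp1]
          exact Finset.mem_image.2 ⟨p.2, Finset.mem_filter.2 ⟨Finset.mem_univ _, hp1⟩, rfl⟩
    have hTcard : T.card ≤ (L.length - 1) * k := by
      calc T.card ≤ ∑ i ∈ I, (({i} : Finset (Fin L.length)) ×ˢ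
            ((Finset.univ.filter (fun j : Fin L.length => (i : ℕ) < j)).image
              (fun j => omegaK k (L.get i) (L.get j)))).card := Finset.card_biUnion_le
        _ ≤ ∑ _i ∈ I, k := by
            apply Finset.sum_le_sum
            intro i _
            rw [Finset.card_product, Finset.card_singleton, one_mul]
            exact part1 k hk L hL i
        _ = I.card * k := by rw [Finset.sum_const, smul_eq_mul]
        _ ≤ (L.length - 1) * k := by
            apply Nat.mul_le_mul_right
            have : I ⊆ Finset.univ.erase ⟨L.length - 1, by omega⟩ := by
              intro i hi
              simp only [hI, Finset.mem_filter, Finset.mem_univ, true_and] at hi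
              apply Finset.mem_erase.2
              refine ⟨?_, Finset.mem_univ _⟩
              intro h
              rw [Fin.ext_iff] at h
              simp at h
              omega
            have h2 := Finset.card_le_card this
            rwa [Finset.card_erase_of_mem (Finset.mem_univ _), Finset.card_univ,
              Fintype.card_fin] at h2
    calc (P.image (fun p => mergedSig k L p.1 (repJ k L p.1 p.2))).card
        ≤ R.card := hcard1
      _ = (R.image φ).card := hcard2
      _ ≤ T.card := Finset.card_le_card hsub
      _ ≤ (L.length - 1) * k := hTcard
      _ = k * (L.length - 1) := Nat.mul_comm _ _
  · intro B hB
    obtain ⟨p, hp, rfl⟩ := Finset.mem_image.1 hB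
    have hp1 : (p.1:ℕ) < p.2 := (hPmem p).1 hp
    exact ⟨p.1, repJ k L p.1 p.2, repJ_lt hp1, rfl⟩
  · intro i j hij
    refine ⟨mergedSig k L i (repJ k L i j),
      Finset.mem_image.2 ⟨(i, j), (hPmem (i, j)).2 hij, rfl⟩, ?_⟩
    apply mergedSig_rel k L i j (repJ k L i j) hij (repJ_lt hij) (repJ_omega hij)
    exact hL.rel_get_of_le (repJ_le hij)
end
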